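/- arXiv:0709.4145 — 5 statements merged into one kernel-verified Lean document; each statement's English description precedes it below -/
import Mathlib

section
/- Let I ⊆ J ⊆ S be monomial ideals. The ℕ^n-graded module J/I is squarefree if and only if all minimal monomial generators of J/I are squarefree monomials and supp(u) ⊄ supp(m) for every monomial m ∈ J \ I and every u in the minimal monomial generating set G(I) of I. -/
/-!
Let `U` and `V` be the upper sets of exponents of the monomials in `I` and `J`, so that the
degrees of `J/I` form `M = V \ U`. Squarefreeness says `a ∈ M ↔ a + eᵢ ∈ M` for `i ∈ supp a`;
iterating, `a ∈ M` forces `a + c ∈ M` whenever `supp c ⊆ supp a`. So no `a ∈ M` can have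
`supp b ⊆ supp a` for a `b ∈ U` (else `a + b ∈ M ∩ U`), and a minimal element of `M` with an
exponent `≥ 2` could be lowered. Conversely, for `a ∈ M` a minimal generator of `I` below
`a + eᵢ` would have its support in `supp a`; and if `a + eᵢ ∈ M`, a squarefree minimal element
of `M` below `a + eᵢ` already lies below `a`, so `a ∈ V`.
-/

open MvPolynomial Finsupp

section

variable {σ : Type*}

theorem MvPolynomial.isUpperSet_setOf_monomial_one_mem {R : Type*} [CommSemiring R]
    (I : Ideal (MvPolynomial σ R)) : IsUpperSet {a | monomial a (1 : R) ∈ I} :=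
  fun _ _ hab ha => I.mem_of_dvd (monomial_dvd_monomial.2 ⟨Or.inr hab, dvd_rfl⟩) ha

theorem Finsupp.tsub_single_one_lt {a : σ →₀ ℕ} {i : σ} (hi : 0 < a i) : a - single i 1 < a :=
  calc a - single i 1 < a - single i 1 + single i 1 :=
        lt_add_of_pos_right _ (pos_iff_ne_zero.2 (single_ne_zero.2 one_ne_zero))
    _ = a := tsub_add_cancel_of_le (single_le_iff.2 hi)

theorem Finsupp.support_add_single_one_subset {a : σ →₀ ℕ} {i : σ} (hi : 0 < a i) :
    (a + single i 1).support ⊆ a.support := by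
  classical
  exact support_add.trans <| Finset.union_subset le_rfl <|
    support_single_subset.trans <| Finset.singleton_subset_iff.2 <| mem_support_iff.2 hi.ne'

/-- `a ∈ s` and `a - eᵢ ∉ s` for all `i ∈ supp a`; in an upper set these are the minimal
elements, i.e. the exponents of the minimal monomial generators. -/
def IsLocallyMinimal (s : Set (σ →₀ ℕ)) (a : σ →₀ ℕ) : Prop :=
  a ∈ s ∧ ∀ i, 0 < a i → a - single i 1 ∉ s

theorem Minimal.isLocallyMinimal {s : Set (σ →₀ ℕ)} {a : σ →₀ ℕ} (h : Minimal (· ∈ s) a) :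
    IsLocallyMinimal s a :=
  ⟨h.prop, fun _ hi hs => h.not_prop_of_lt (tsub_single_one_lt hi) hs⟩

theorem exists_isLocallyMinimal_le {s : Set (σ →₀ ℕ)} {a : σ →₀ ℕ} (ha : a ∈ s) :
    ∃ b ≤ a, IsLocallyMinimal s b :=
  (exists_minimal_le_of_wellFoundedLT _ a ha).imp fun _ ⟨hba, hb⟩ => ⟨hba, hb.isLocallyMinimal⟩

/-- The degrees `a` with `(J/I)_a ≠ 0` form `V \ U` for the upper sets `U`, `V` of exponents of
monomials in `I`, `J`; as all components of `J/I` have dimension at most one, `J/I` is squarefree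
exactly when this set is. -/
def IsSquarefreeSet (M : Set (σ →₀ ℕ)) : Prop :=
  ∀ a i, 0 < a i → (a ∈ M ↔ a + single i 1 ∈ M)

namespace IsSquarefreeSet

variable {M : Set (σ →₀ ℕ)}

theorem add_single_mem_iff (hM : IsSquarefreeSet M) {a : σ →₀ ℕ} {i : σ} (hi : 0 < a i)
    (k : ℕ) : a + single i k ∈ M ↔ a ∈ M := by
  induction k with
  | zero => simp
  | succ k ih =>
    rw [single_add, ← add_assoc, ← hM _ i (by simp; omega), ih]

theorem add_mem (hM : IsSquarefreeSet M) {a c : σ →₀ ℕ} (ha : a ∈ M)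
    (hc : c.support ⊆ a.support) : a + c ∈ M := by
  induction c using Finsupp.induction_linear generalizing a with
  | zero => simpa
  | add f g hf hg =>
    rw [← add_assoc]
    exact hg (hf ha ((support_mono le_self_add).trans hc))
      (((support_mono le_add_self).trans hc).trans (support_mono le_self_add))
  | single i k =>
    rcases eq_or_ne k 0 with rfl | hk
    · simpa
    · rw [support_single _ hk, Finset.singleton_subset_iff, Finsupp.mem_support_iff] at hc
      exact (hM.add_single_mem_iff (Nat.pos_of_ne_zero hc) k).2 ha

theorem le_one_of_isLocallyMinimal (hM : IsSquarefreeSet M) {a : σ →₀ ℕ}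
    (ha : IsLocallyMinimal M a) (j : σ) : a j ≤ 1 := by
  by_contra! h
  have hj : 0 < (a - single j 1 : σ →₀ ℕ) j := by rw [tsub_apply, single_eq_same]; omega
  refine ha.2 j (by omega) ((hM _ j hj).2 ?_)
  rw [tsub_add_cancel_of_le (single_le_iff.2 (by omega))]
  exact ha.1

theorem not_support_subset (hM : IsSquarefreeSet M) {U : Set (σ →₀ ℕ)} (hU : IsUpperSet U)
    (hMU : Disjoint M U) {a b : σ →₀ ℕ} (ha : a ∈ M) (hb : b ∈ U) :
    ¬ b.support ⊆ a.support := fun hba =>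
  hMU.notMem_of_mem_left (hM.add_mem ha hba) (hU le_add_self hb)

end IsSquarefreeSet

theorem isSquarefreeSet_sdiff {U V : Set (σ →₀ ℕ)} (hU : IsUpperSet U) (hV : IsUpperSet V)
    (hsq : ∀ a, IsLocallyMinimal (V \ U) a → ∀ j, a j ≤ 1)
    (hsupp : ∀ a b, a ∈ V \ U → IsLocallyMinimal U b → ¬ b.support ⊆ a.support) :
    IsSquarefreeSet (V \ U) := by
  intro a i hi
  constructor
  · rintro ⟨haV, haU⟩
    refine ⟨hV le_self_add haV, fun haU' => ?_⟩
    obtain ⟨b, hb, hbmin⟩ := exists_isLocallyMinimal_le haU'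
    exact hsupp a b ⟨haV, haU⟩ hbmin ((support_mono hb).trans (support_add_single_one_subset hi))
  · intro ha'
    refine ⟨?_, fun haU => ha'.2 (hU le_self_add haU)⟩
    obtain ⟨c, hc, hcmin⟩ := exists_isLocallyMinimal_le ha'
    have hca : c ≤ a := fun j => by
      rcases eq_or_ne j i with rfl | hji
      · have := hsq c hcmin j
        omega
      · simpa [hji] using hc j
    exact hV hca hcmin.1.1

theorem isSquarefreeSet_sdiff_iff {U V : Set (σ →₀ ℕ)} (hU : IsUpperSet U) (hV : IsUpperSet V) :
    IsSquarefreeSet (V \ U) ↔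
      (∀ a, IsLocallyMinimal (V \ U) a → ∀ j, a j ≤ 1) ∧
        ∀ a b, a ∈ V \ U → IsLocallyMinimal U b → ¬ b.support ⊆ a.support :=
  ⟨fun h => ⟨fun _ => h.le_one_of_isLocallyMinimal,
      fun _ _ ha hb => h.not_support_subset hU Set.disjoint_sdiff_left ha hb.1⟩,
    fun h => isSquarefreeSet_sdiff hU hV h.1 h.2⟩

end

theorem stmt2_general (K : Type) [Field K] (n : ℕ)
    (I J : Ideal (MvPolynomial (Fin n) K)) :
    -- squarefreeness of `J/I`, expressed componentwise on monomials
    (∀ (a : Fin n →₀ ℕ) (i : Fin n), 0 < a i →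
        ((monomial a (1 : K) ∈ J ∧ monomial a (1 : K) ∉ I) ↔
          (monomial (a + Finsupp.single i 1) (1 : K) ∈ J ∧
            monomial (a + Finsupp.single i 1) (1 : K) ∉ I)))
    ↔
    -- every minimal monomial generator of `J/I` is squarefree …
    ((∀ a : Fin n →₀ ℕ,
        (monomial a (1 : K) ∈ J ∧ monomial a (1 : K) ∉ I ∧
          ∀ i : Fin n, 0 < a i →
            ¬ (monomial (a - Finsupp.single i 1) (1 : K) ∈ J ∧
                monomial (a - Finsupp.single i 1) (1 : K) ∉ I)) →
        ∀ j, a j ≤ 1)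
      ∧
      -- … and `supp(u) ⊄ supp(m)` for all monomials `m ∈ J \ I`, `u ∈ G(I)`
      (∀ a b : Fin n →₀ ℕ,
        monomial a (1 : K) ∈ J → monomial a (1 : K) ∉ I →
        monomial b (1 : K) ∈ I →
        (∀ i : Fin n, 0 < b i → monomial (b - Finsupp.single i 1) (1 : K) ∉ I) →
        ¬ (∀ j, 0 < b j → 0 < a j))) := by
  have key := isSquarefreeSet_sdiff_iff (isUpperSet_setOf_monomial_one_mem (R := K) I)
    (isUpperSet_setOf_monomial_one_mem J)
  simpa only [IsSquarefreeSet, IsLocallyMinimal, Set.mem_sdiff, Set.mem_ofPred_eq, and_assoc,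
    and_imp, Finset.subset_iff, Finsupp.mem_support_iff, ← pos_iff_ne_zero] using key

/-- Let `I ⊆ J ⊆ S = K[x_1,…,x_n]` be monomial ideals.  Since all
graded components of `J/I` have `K`-dimension at most one, the `ℕⁿ`-graded
module `J/I` is squarefree (multiplication `(J/I)_a → (J/I)_{a+ε_i}` by `x_i`
is bijective for every `a` and every `i ∈ supp a`) if and only if every minimal
monomial generator of `J/I` is a squarefree monomial and
`supp(u) ⊄ supp(m)` for every monomial `m ∈ J \ I` and every `u ∈ G(I)`. -/
theorem stmt2 (K : Type) [Field K] (n : ℕ)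
    (I J : Ideal (MvPolynomial (Fin n) K))
    (A B : Set (Fin n →₀ ℕ))
    (hmI : I = Ideal.span ((fun a => (monomial a (1 : K))) '' A))
    (hmJ : J = Ideal.span ((fun a => (monomial a (1 : K))) '' B))
    (hIJ : I ≤ J) :
    -- squarefreeness of `J/I`, expressed componentwise on monomials
    (∀ (a : Fin n →₀ ℕ) (i : Fin n), 0 < a i →
        ((monomial a (1 : K) ∈ J ∧ monomial a (1 : K) ∉ I) ↔
          (monomial (a + Finsupp.single i 1) (1 : K) ∈ J ∧
            monomial (a + Finsupp.single i 1) (1 : K) ∉ I)))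
    ↔
    -- every minimal monomial generator of `J/I` is squarefree …
    ((∀ a : Fin n →₀ ℕ,
        (monomial a (1 : K) ∈ J ∧ monomial a (1 : K) ∉ I ∧
          ∀ i : Fin n, 0 < a i →
            ¬ (monomial (a - Finsupp.single i 1) (1 : K) ∈ J ∧
                monomial (a - Finsupp.single i 1) (1 : K) ∉ I)) →
        ∀ j, a j ≤ 1)
      ∧
      -- … and `supp(u) ⊄ supp(m)` for all monomials `m ∈ J \ I`, `u ∈ G(I)`
      (∀ a b : Fin n →₀ ℕ,
        monomial a (1 : K) ∈ J → monomial a (1 : K) ∉ I →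
        monomial b (1 : K) ∈ I →
        (∀ i : Fin n, 0 < b i → monomial (b - Finsupp.single i 1) (1 : K) ∉ I) →
        ¬ (∀ j, 0 < b j → 0 < a j))) :=
  stmt2_general K n I J
end

section
/- Let M be a finitely generated ℤ^n-graded S-module with prime filtration 0 = M_0 ⊂ M_1 ⊂ … ⊂ M_r = M such that M_i/M_{i−1} ≅ S/P_{F_i}(−a_i). Then M decomposes as a direct sum of K-vector spaces M = ⊕_{i=1}^r m_i K[Z_{F_i}], where m_i ∈ M_i is a homogeneous element of degree a_i with (M_{i−1} :_S m_i) = P_{F_i} and Z_{F_i} = {x_j : j ∉ F_i}; each m_i K[Z_{F_i}] is a Stanley space, i.e., a free K[Z_{F_i}]-module of rank one. -/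
/-!
Each step `M_i = M_{i-1} + S m_i` of the filtration contributes the Stanley space
`m_i K[Z_{F_i}]`. A monomial `x^b` with `b` meeting `F_i` lies in `P_{F_i} = (M_{i-1} : m_i)`, so
`x^b m_i ∈ M_{i-1}` and `M_i = M_{i-1} + m_i K[Z_{F_i}]` over `K`. A polynomial supported on
monomials avoiding `F_i` lies in `P_{F_i}` only if it is zero, so the `x^b m_i` with `b` avoiding
`F_i` are linearly independent modulo `M_{i-1}`. Concatenating these bases of the successive
quotients along the filtration gives a `K`-basis of `M`.
-/

open MvPolynomial Submodule Set

section Filtration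

variable {R M : Type*} [Ring R] [AddCommGroup M] [Module R M]

def Fin.sigmaEquivSumLast {r : ℕ} (ι : Fin (r + 1) → Type*) :
    (Σ i, ι i) ≃ (Σ i : Fin r, ι i.castSucc) ⊕ ι (Fin.last r) where
  toFun p := Fin.lastCases (motive := fun i => ι i → _) Sum.inr
    (fun i x => Sum.inl ⟨i, x⟩) p.1 p.2
  invFun := Sum.elim (fun p => ⟨p.1.castSucc, p.2⟩) (fun x => ⟨Fin.last r, x⟩)
  left_inv := by
    rintro ⟨i, x⟩
    induction i using Fin.lastCases <;> simp
  right_inv := by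
    rintro (⟨i, x⟩ | x) <;> simp

theorem linearIndependent_sigma_of_filtration {r : ℕ} (N : Fin (r + 1) → Submodule R M)
    {ι : Fin r → Type*} (v : ∀ i, ι i → M) (hN : Monotone N) (hv : ∀ i x, v i x ∈ N i.succ)
    (hind : ∀ i, LinearIndependent R ((N i.castSucc).mkQ ∘ v i)) :
    LinearIndependent R (fun p : Σ i, ι i => v p.1 p.2) := by
  induction r with
  | zero => exact linearIndependent_empty_type
  | succ r ih =>
    set L := N (Fin.last r).castSucc
    have hlow := ih (N ∘ Fin.castSucc) (fun i => v i.castSucc)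
      (hN.comp Fin.strictMono_castSucc.monotone)
      (fun i x => by simpa only [Function.comp_apply, ← Fin.succ_castSucc] using hv _ x)
      (fun i => hind i.castSucc)
    have hmemL (p : Σ i : Fin r, ι i.castSucc) : v p.1.castSucc p.2 ∈ L := by
      refine hN ?_ (hv _ _)
      simpa only [Fin.succ_castSucc, Fin.castSucc_le_castSucc_iff] using Fin.le_last _
    have hsum := LinearIndependent.sumElim_of_quotient
      (f := fun p => (⟨_, hmemL p⟩ : L)) (hlow.of_comp L.subtype) _ (hind (Fin.last r))
    convert (linearIndependent_equiv (Fin.sigmaEquivSumLast ι)).2 hsum using 1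
    ext ⟨i, x⟩
    induction i using Fin.lastCases <;> simp [Fin.sigmaEquivSumLast]

theorem le_span_range_sigma_of_filtration {r : ℕ} (N : Fin (r + 1) → Submodule R M)
    {ι : Fin r → Type*} (v : ∀ i, ι i → M) (hbot : N 0 = ⊥)
    (hle : ∀ i, N i.succ ≤ N i.castSucc ⊔ span R (range (v i))) :
    N (Fin.last r) ≤ span R (range fun p : Σ i, ι i => v p.1 p.2) := by
  suffices ∀ k, N k ≤ span R (range fun p : Σ i, ι i => v p.1 p.2) from this _
  intro k
  induction k using Fin.induction with
  | zero => simp [hbot]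
  | succ i ih =>
    refine (hle i).trans (sup_le ih (span_mono ?_))
    rintro _ ⟨x, rfl⟩
    exact ⟨⟨i, x⟩, rfl⟩

end Filtration

section Stanley

variable {σ K M : Type*} [CommRing K]

theorem MvPolynomial.disjoint_restrictSupport_ideal_span_X_image (F : Set σ) :
    Disjoint (restrictSupport K {b : σ →₀ ℕ | ∀ j ∈ F, b j = 0})
      ((Ideal.span (X '' F) : Ideal (MvPolynomial σ K)).restrictScalars K) := by
  refine Submodule.disjoint_def.2 fun p hsupp hideal => ?_
  rw [restrictScalars_mem, mem_ideal_span_X_image] at hideal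
  ext b
  by_contra hb
  obtain ⟨j, hj, hbj⟩ := hideal b (mem_support_iff.2 hb)
  exact hbj (hsupp (mem_support_iff.2 hb) j hj)

variable [AddCommGroup M] [Module K M] [Module (MvPolynomial σ K) M]
  [IsScalarTower K (MvPolynomial σ K) M] {N : Submodule (MvPolynomial σ K) M} {m : M} {F : Set σ}

theorem linearIndependent_monomial_smul_mod_of_colon_le
    (h : N.colon {m} ≤ Ideal.span (X '' F)) :
    LinearIndependent K ((N.restrictScalars K).mkQ ∘
      fun b : {b : σ →₀ ℕ // ∀ j ∈ F, b j = 0} => monomial b.1 (1 : K) • m) := by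
  let g := (N.restrictScalars K).mkQ ∘ₗ
    (LinearMap.toSpanSingleton (MvPolynomial σ K) M m).restrictScalars K
  have hmon : LinearIndependent K fun b : {b : σ →₀ ℕ // ∀ j ∈ F, b j = 0} =>
      (monomial b.1 (1 : K) : MvPolynomial σ K) :=
    (basisMonomials σ K).linearIndependent.comp _ Subtype.val_injective
  refine hmon.map (f := g) ((disjoint_restrictSupport_ideal_span_X_image (K := K) F).mono ?_ ?_)
  · rw [span_le]
    rintro _ ⟨b, rfl⟩
    simp
  · intro p hp
    exact h (mem_colon_singleton.2 ((Quotient.mk_eq_zero _).1 hp))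

theorem restrictScalars_sup_span_singleton_le_of_le_colon
    (h : Ideal.span (X '' F) ≤ N.colon {m}) :
    (N ⊔ span (MvPolynomial σ K) {m}).restrictScalars K ≤ N.restrictScalars K ⊔
      span K (range fun b : {b : σ →₀ ℕ // ∀ j ∈ F, b j = 0} => monomial b.1 (1 : K) • m) := by
  intro x hx
  obtain ⟨y, hy, _, hz, rfl⟩ := mem_sup.1 hx
  obtain ⟨q, rfl⟩ := mem_span_singleton.1 hz
  refine add_mem (mem_sup_left hy) ?_
  clear hx hz
  induction q using MvPolynomial.induction_on' with
  | monomial b c =>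
    rw [← mul_one c, ← smul_eq_mul, ← smul_monomial, smul_assoc]
    refine smul_mem _ c ?_
    by_cases hb : ∀ j ∈ F, b j = 0
    · exact mem_sup_right (subset_span ⟨⟨b, hb⟩, rfl⟩)
    · push Not at hb
      refine mem_sup_left (mem_colon_singleton.1 (h ?_))
      rw [mem_ideal_span_X_image]
      intro b' hb'
      exact Finset.mem_singleton.1 (support_monomial_subset hb') ▸ hb
  | add p q hp hq => rw [add_smul]; exact add_mem hp hq

end Stanley

theorem stmt9_general (K : Type) [Field K] (n r : ℕ)
    (M : Type) [AddCommGroup M] [Module K M]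
    [Module (MvPolynomial (Fin n) K) M]
    [IsScalarTower K (MvPolynomial (Fin n) K) M]
    (M_ : Fin (r + 1) → Submodule (MvPolynomial (Fin n) K) M)
    (F : Fin r → Finset (Fin n)) (m : Fin r → M)
    (hbot : M_ 0 = ⊥) (htop : M_ (Fin.last r) = ⊤)
    (hmem : ∀ i : Fin r, m i ∈ M_ i.succ)
    (hgen : ∀ i : Fin r,
        M_ i.succ = M_ i.castSucc ⊔ Submodule.span (MvPolynomial (Fin n) K) {m i})
    (hcolon : ∀ i : Fin r,
        {s : MvPolynomial (Fin n) K | s • m i ∈ M_ i.castSucc} =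
          (Ideal.span {p | ∃ j ∈ F i, p = (X j : MvPolynomial (Fin n) K)} : Set _)) :
    LinearIndependent K
      (fun p : Σ i : Fin r, {b : Fin n →₀ ℕ // ∀ j ∈ F i, b j = 0} =>
        (monomial p.2.val (1 : K)) • m p.1) ∧
    Submodule.span K
      {v : M | ∃ (i : Fin r) (b : Fin n →₀ ℕ),
        (∀ j ∈ F i, b j = 0) ∧ v = (monomial b (1 : K)) • m i} = ⊤ := by
  have hcolon' (i : Fin r) :
      (M_ i.castSucc).colon {m i} = Ideal.span (X '' (F i : Set (Fin n))) := by
    ext s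
    have hX : {p | ∃ j ∈ F i, p = (X j : MvPolynomial (Fin n) K)} = X '' (F i : Set (Fin n)) := by
      ext p
      simp [eq_comm]
    simpa [hX] using Set.ext_iff.1 (hcolon i) s
  let N k := (M_ k).restrictScalars K
  let v (i : Fin r) (b : {b : Fin n →₀ ℕ // ∀ j ∈ F i, b j = 0}) := monomial b.1 (1 : K) • m i
  have hN : Monotone N := Fin.monotone_iff_le_succ.2 fun i => by simp [N, hgen i]
  refine ⟨linearIndependent_sigma_of_filtration N v hN
    (fun i b => (M_ i.succ).smul_mem _ (hmem i))
    (fun i => linearIndependent_monomial_smul_mod_of_colon_le (hcolon' i).le), ?_⟩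
  have hspan := le_span_range_sigma_of_filtration N v (by simp [N, hbot])
    (fun i => by
      simp only [N, hgen i]
      exact restrictScalars_sup_span_singleton_le_of_le_colon (hcolon' i).ge)
  rw [eq_top_iff]
  convert hspan using 1
  · simp [N, htop]
  · congr 1
    ext x
    simp [v, eq_comm]

/-- Let `M` be a finitely generated `ℤⁿ`-graded module over
`S = K[x_1,…,x_n]` with a prime filtration `0 = M_0 ⊂ M_1 ⊂ … ⊂ M_r = M`,
`M_i/M_{i−1} ≅ S/P_{F_i}(−a_i)`; the latter is unpacked as: there is a
homogeneous `m_i ∈ M_i` of degree `a_i` with `M_i = M_{i−1} + S·m_i` and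
`(M_{i−1} :_S m_i) = P_{F_i}`.  Then `M = ⊕_{i=1}^r m_i K[Z_{F_i}]` with
`Z_{F_i} = {x_j : j ∉ F_i}`, i.e. the elements `x^b · m_i` with
`supp b ∩ F_i = ∅` form a `K`-basis of `M` (so each `m_i K[Z_{F_i}]` is a
Stanley space, a free `K[Z_{F_i}]`-module of rank one). -/
theorem stmt9 (K : Type) [Field K] (n r : ℕ)
    (M : Type) [AddCommGroup M] [Module K M]
    [Module (MvPolynomial (Fin n) K) M]
    [IsScalarTower K (MvPolynomial (Fin n) K) M]
    (ℳ : (Fin n →₀ ℤ) → Submodule K M)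
    (hdecomp : DirectSum.IsInternal ℳ)
    (hcompat : ∀ (a : Fin n →₀ ℤ) (i : Fin n), ∀ m ∈ ℳ a,
        (X i : MvPolynomial (Fin n) K) • m ∈ ℳ (a + Finsupp.single i 1))
    (hfg : Module.Finite (MvPolynomial (Fin n) K) M)
    (M_ : Fin (r + 1) → Submodule (MvPolynomial (Fin n) K) M)
    (F : Fin r → Finset (Fin n)) (a : Fin r → (Fin n →₀ ℤ)) (m : Fin r → M)
    (hbot : M_ 0 = ⊥) (htop : M_ (Fin.last r) = ⊤)
    (hmem : ∀ i : Fin r, m i ∈ M_ i.succ)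
    (hhom : ∀ i : Fin r, m i ∈ ℳ (a i))
    (hgen : ∀ i : Fin r,
        M_ i.succ = M_ i.castSucc ⊔ Submodule.span (MvPolynomial (Fin n) K) {m i})
    (hcolon : ∀ i : Fin r,
        {s : MvPolynomial (Fin n) K | s • m i ∈ M_ i.castSucc} =
          (Ideal.span {p | ∃ j ∈ F i, p = (X j : MvPolynomial (Fin n) K)} : Set _)) :
    LinearIndependent K
      (fun p : Σ i : Fin r, {b : Fin n →₀ ℕ // ∀ j ∈ F i, b j = 0} =>
        (monomial p.2.val (1 : K)) • m p.1) ∧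
    Submodule.span K
      {v : M | ∃ (i : Fin r) (b : Fin n →₀ ℕ),
        (∀ j ∈ F i, b j = 0) ∧ v = (monomial b (1 : K)) • m i} = ⊤ :=
  stmt9_general K n r M M_ F m hbot htop hmem hgen hcolon
end

section
/- A finitely generated ℕ^n-graded S-module M has a squarefree Stanley decomposition if and only if M is a squarefree S-module. -/
/-!
A squarefree Stanley decomposition `M = ⊕ m_j K[Z_j]` is a `K`-basis `{x^b m_j : supp b ⊆ Z_j}`
of homogeneous elements. In degree `c` the basis consists of the `x^b m_j` with
`deg m_j + b = c`; if `c_i > 0`, then in degree `c + ε_i` the exponent `b` must have `b_i > 0`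
because `deg m_j` is squarefree, so `x_i` maps the basis of `M_c` bijectively onto that of
`M_{c+ε_i}`.

Conversely, in a squarefree module every `M_c` is the image of `M_{ε_F}` with `F = supp c`, so a
nonzero `M` has a nonzero squarefree component. Take `F` maximal with `M_{ε_F} ≠ 0` and
`0 ≠ m ∈ M_{ε_F}`: then `x_j m = 0` for `j ∉ F` while `x^b m ≠ 0` for `supp b ⊆ F`, so `S m` is the
Stanley space `m K[F]`. Since `S m` is itself squarefree, `M / S m` is squarefree, and its
squarefree components have smaller total dimension; by induction it has a squarefree Stanley
decomposition, and lifting its generators and adding `m K[F]` gives one of `M`.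
-/

open MvPolynomial DirectSum Set Submodule
open scoped Pointwise

namespace SquarefreeModule

theorem bijOn_span_image {κ R M : Type*} [Ring R] [AddCommGroup M] [Module R M]
    (f : M →ₗ[R] M) {v : κ → M} {g : κ → κ} {s t : Set κ} (hv : LinearIndepOn R v t)
    (hg : BijOn g s t) (hfg : ∀ j ∈ s, f (v j) = v (g j)) :
    BijOn f (span R (v '' s)) (span R (v '' t)) := by
  have hmap : ((span R (v '' s)).map f : Set M) = span R (v '' t) := by
    rw [map_span, image_image, ← hg.image_eq, image_image, image_congr hfg]
  have hli : LinearIndependent R (f ∘ fun j : s => v j) := by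
    rw [← hg.image_eq] at hv
    exact (hv.comp_of_image hg.injOn).congr fun j hj => (hfg j hj).symm
  refine ⟨?_, LinearMap.injOn_of_disjoint_ker le_rfl ?_, ?_⟩
  · rw [← hmap]; exact fun x hx => mem_image_of_mem f hx
  · simpa [← image_eq_range] using Submodule.range_ker_disjoint hli
  · rw [← hmap]; exact fun _ hx => hx

theorem finrank_map_lt_of_mem_ker {K V W : Type*} [Field K] [AddCommGroup V] [Module K V]
    [AddCommGroup W] [Module K W] (f : V →ₗ[K] W) {p : Submodule K V} [FiniteDimensional K p]
    {x : V} (hx : x ∈ p) (hx0 : x ≠ 0) (hfx : f x = 0) :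
    Module.finrank K (p.map f) < Module.finrank K p := by
  have hker : LinearMap.ker (f ∘ₗ p.subtype) ≠ ⊥ :=
    (Submodule.ne_bot_iff _).2 ⟨⟨x, hx⟩, hfx, fun h => hx0 (congrArg Subtype.val h)⟩
  have hrank := LinearMap.finrank_range_add_finrank_ker (f ∘ₗ p.subtype)
  rw [LinearMap.range_comp, range_subtype] at hrank
  have := (Submodule.finrank_eq_zero (S := LinearMap.ker (f ∘ₗ p.subtype))).not.2 hker
  omega

section Graded

variable {ι R M : Type*} [DecidableEq ι] [Ring R] [AddCommGroup M] [Module R M]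
  (ℳ : ι → Submodule R M) [Decomposition ℳ]

noncomputable def gradedProj (c : ι) : M →ₗ[R] M :=
  (ℳ c).subtype ∘ₗ component R ι (fun i => ℳ i) c ∘ₗ (decomposeLinearEquiv ℳ).toLinearMap

variable {ℳ}

@[simp] theorem gradedProj_apply (c : ι) (x : M) : gradedProj ℳ c x = decompose ℳ x c := rfl

theorem gradedProj_of_mem {c d : ι} {x : M} (hx : x ∈ ℳ d) :
    gradedProj ℳ c x = if d = c then x else 0 := by
  split_ifs with h
  · subst h; simp [decompose_of_mem_same ℳ hx]
  · simp [decompose_of_mem_ne ℳ hx h]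

theorem mem_span_image_degree_eq {κ : Type*} {v : κ → M} {deg : κ → ι}
    (hv : ∀ j, v j ∈ ℳ (deg j)) {s : Set κ} {c : ι} {x : M} (hx : x ∈ span R (v '' s))
    (hxc : x ∈ ℳ c) : x ∈ span R (v '' {j ∈ s | deg j = c}) := by
  have hmap := mem_map_of_mem (f := gradedProj ℳ c) hx
  rw [map_span, gradedProj_apply, decompose_of_mem_same ℳ hxc] at hmap
  refine span_le.2 ?_ hmap
  rintro _ ⟨_, ⟨j, hj, rfl⟩, rfl⟩
  rw [gradedProj_of_mem (hv j)]
  split_ifs with h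
  · exact subset_span ⟨j, ⟨hj, h⟩, rfl⟩
  · exact zero_mem _

theorem isHomogeneous_span {s : Set M} (hs : ∀ x ∈ s, ∃ c, x ∈ ℳ c) :
    SetLike.IsHomogeneous ℳ (span R s) := by
  intro c x hx
  have hmap := mem_map_of_mem (f := gradedProj ℳ c) hx
  rw [map_span] at hmap
  refine span_le.2 ?_ hmap
  rintro _ ⟨y, hy, rfl⟩
  obtain ⟨d, hd⟩ := hs y hy
  rw [gradedProj_of_mem hd]
  split_ifs
  · exact subset_span hy
  · exact zero_mem _

theorem isInternal_map {M' : Type*} [AddCommGroup M'] [Module R M'] {q : M →ₗ[R] M'}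
    (hq : Function.Surjective q) (hker : SetLike.IsHomogeneous ℳ (LinearMap.ker q)) :
    IsInternal fun c => (ℳ c).map q := by
  rw [isInternal_submodule_iff_iSupIndep_and_iSup_eq_top]
  refine ⟨iSupIndep_def.2 fun c => disjoint_def.2 ?_, ?_⟩
  · rintro _ ⟨u, hu, rfl⟩ hw
    simp only [← Submodule.map_iSup] at hw
    obtain ⟨w, hw, hqw⟩ := hw
    have hw0 : gradedProj ℳ c w = 0 :=
      (iSup₂_le fun d hd y hy => by simp [decompose_of_mem_ne ℳ hy hd] :
        ⨆ d, ⨆ (_ : d ≠ c), ℳ d ≤ LinearMap.ker (gradedProj ℳ c)) hw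
    have hker_c := hker c (show u - w ∈ LinearMap.ker q by simp [hqw])
    rwa [← gradedProj_apply, map_sub, hw0, sub_zero, gradedProj_apply,
      decompose_of_mem_same ℳ hu] at hker_c
  · rw [← Submodule.map_iSup, (Decomposition.isInternal ℳ).submodule_iSup_eq_top,
      Submodule.map_top, LinearMap.range_eq_top.2 hq]

end Graded

section Exponents

variable {σ : Type*}

def exponentsIn (s : Finset σ) : Set (σ →₀ ℕ) := {b | ↑b.support ⊆ (s : Set σ)}

theorem single_le_and_add_tsub_eq {a b c : σ →₀ ℕ} {i : σ} (ha : a i ≤ 1) (hc : 0 < c i)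
    (h : a + b = c + Finsupp.single i 1) :
    Finsupp.single i 1 ≤ b ∧ a + (b - Finsupp.single i 1) = c := by
  have hi := DFunLike.congr_fun h i
  simp only [Finsupp.add_apply, Finsupp.single_eq_same] at hi
  have hle : Finsupp.single i 1 ≤ b := Finsupp.single_le_iff.2 (by omega)
  refine ⟨hle, add_right_cancel (b := Finsupp.single i 1) ?_⟩
  rwa [add_assoc, tsub_add_cancel_of_le hle]

variable [DecidableEq σ]

noncomputable def sqfreeDeg (s : Finset σ) : σ →₀ ℕ := ∑ i ∈ s, Finsupp.single i 1

theorem sqfreeDeg_apply (s : Finset σ) (j : σ) : sqfreeDeg s j = if j ∈ s then 1 else 0 := by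
  simp [sqfreeDeg, Finsupp.finsetSum_apply, Finsupp.single_apply]

theorem sqfreeDeg_le_one (s : Finset σ) (j : σ) : sqfreeDeg s j ≤ 1 := by
  rw [sqfreeDeg_apply]; split_ifs <;> simp

theorem support_sqfreeDeg (s : Finset σ) : (sqfreeDeg s).support = s := by
  ext j; simp [sqfreeDeg_apply]

theorem sqfreeDeg_insert {s : Finset σ} {j : σ} (hj : j ∉ s) :
    sqfreeDeg (insert j s) = sqfreeDeg s + Finsupp.single j 1 := by
  rw [sqfreeDeg, Finset.sum_insert hj, add_comm, sqfreeDeg]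

theorem sqfreeDeg_support_le (c : σ →₀ ℕ) : sqfreeDeg c.support ≤ c := fun j => by
  rw [sqfreeDeg_apply]; split_ifs with h <;> simp_all [Nat.one_le_iff_ne_zero]

end Exponents

section Monomial

variable {σ K M : Type*} [CommSemiring K] [AddCommMonoid M] [Module (MvPolynomial σ K) M]

theorem monomial_add_smul_eq_comp (b b' : σ →₀ ℕ) :
    (fun x : M => monomial (b + b') (1 : K) • x) =
      (fun x => monomial b' (1 : K) • x) ∘ (fun x => monomial b (1 : K) • x) := by
  ext x
  simp [← mul_smul, monomial_mul, add_comm]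

theorem X_smul_monomial_smul (i : σ) (b : σ →₀ ℕ) (x : M) :
    (X i : MvPolynomial σ K) • monomial b (1 : K) • x =
      monomial (b + Finsupp.single i 1) (1 : K) • x := by
  rw [← mul_smul, X, monomial_mul, one_mul, add_comm]

variable [Module K M]

def XSmulGraded (ℳ : (σ →₀ ℕ) → Submodule K M) : Prop :=
  ∀ a i, MapsTo (fun x : M => (X i : MvPolynomial σ K) • x) (ℳ a) (ℳ (a + Finsupp.single i 1))

def IsSquarefree (ℳ : (σ →₀ ℕ) → Submodule K M) : Prop :=
  ∀ a i, 0 < a i →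
    BijOn (fun x : M => (X i : MvPolynomial σ K) • x) (ℳ a) (ℳ (a + Finsupp.single i 1))

variable {ℳ : (σ →₀ ℕ) → Submodule K M}

theorem isSquarefree_iff (hX : XSmulGraded ℳ) :
    IsSquarefree ℳ ↔ ∀ (a : σ →₀ ℕ) (i : σ), 0 < a i →
      Function.Bijective (fun x : ℳ a =>
        (⟨(X i : MvPolynomial σ K) • (x : M), hX a i x.2⟩ : ℳ (a + Finsupp.single i 1))) := by
  refine forall₂_congr fun a i => imp_congr_right fun _ => ⟨BijOn.bijective, fun h => ?_⟩
  refine ⟨hX a i, fun x hx y hy hxy => ?_, fun y hy => ?_⟩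
  · exact congrArg Subtype.val (h.1 (a₁ := ⟨x, hx⟩) (a₂ := ⟨y, hy⟩) (Subtype.ext hxy))
  · obtain ⟨x, hx⟩ := h.2 ⟨y, hy⟩
    exact ⟨x, x.2, congrArg Subtype.val hx⟩

theorem mapsTo_monomial_smul (hX : XSmulGraded ℳ) (b c : σ →₀ ℕ) :
    MapsTo (fun x : M => monomial b (1 : K) • x) (ℳ c) (ℳ (c + b)) := by
  induction b using Finsupp.induction_linear generalizing c with
  | zero =>
    simp only [← MvPolynomial.one_def, one_smul, add_zero]
    exact mapsTo_id _
  | add b b' hb hb' =>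
    rw [monomial_add_smul_eq_comp, ← add_assoc]
    exact (hb' _).comp (hb c)
  | single i k =>
    induction k generalizing c with
    | zero =>
      simp only [Finsupp.single_zero, ← MvPolynomial.one_def, one_smul, add_zero]
      exact mapsTo_id _
    | succ k ih =>
      rw [Finsupp.single_add, monomial_add_smul_eq_comp, ← add_assoc]
      exact (hX _ i).comp (ih c)

theorem bijOn_monomial_smul (hsq : IsSquarefree ℳ) {b c : σ →₀ ℕ}
    (hbc : b.support ⊆ c.support) :
    BijOn (fun x : M => monomial b (1 : K) • x) (ℳ c) (ℳ (c + b)) := by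
  induction b using Finsupp.induction_linear generalizing c with
  | zero =>
    simp only [← MvPolynomial.one_def, one_smul, add_zero]
    exact bijOn_id _
  | add b b' hb hb' =>
    rw [monomial_add_smul_eq_comp, ← add_assoc]
    refine (hb' ?_).comp (hb ?_)
    · exact (Finsupp.support_mono le_add_self).trans
        (hbc.trans (Finsupp.support_mono le_self_add))
    · exact (Finsupp.support_mono le_self_add).trans hbc
  | single i k =>
    induction k generalizing c with
    | zero =>
      simp only [Finsupp.single_zero, ← MvPolynomial.one_def, one_smul, add_zero]
      exact bijOn_id _
    | succ k ih =>
      have hi : c i ≠ 0 := Finsupp.mem_support_iff.1 (hbc (by simp))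
      rw [Finsupp.single_add, monomial_add_smul_eq_comp, ← add_assoc]
      refine (hsq _ i (by simp [Nat.pos_of_ne_zero hi])).comp (ih ?_)
      exact Finsupp.support_single_subset.trans (by simpa using hi)

theorem sqfreeDeg_support_ne_bot [DecidableEq σ] (hsq : IsSquarefree ℳ) {c : σ →₀ ℕ}
    (hc : ℳ c ≠ ⊥) : ℳ (sqfreeDeg c.support) ≠ ⊥ := by
  intro hbot
  refine hc (eq_bot_iff.2 fun y hy => ?_)
  have hsupp : (c - sqfreeDeg c.support).support ⊆ (sqfreeDeg c.support).support := by
    rw [support_sqfreeDeg]; exact fun j hj => Finsupp.support_tsub hj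
  rw [← add_tsub_cancel_of_le (sqfreeDeg_support_le c)] at hy
  obtain ⟨x, hx, rfl⟩ := (bijOn_monomial_smul hsq hsupp).surjOn hy
  rw [SetLike.mem_coe, hbot, mem_bot] at hx
  simp [hx]

theorem exists_mem_sqfreeDeg_forall_X_smul_eq_zero [Fintype σ] [DecidableEq σ]
    (hX : XSmulGraded ℳ) (h : ∃ s, ℳ (sqfreeDeg s) ≠ ⊥) :
    ∃ s, ∃ m ∈ ℳ (sqfreeDeg s), m ≠ 0 ∧ ∀ j ∉ s, (X j : MvPolynomial σ K) • m = 0 := by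
  obtain ⟨s, hs, hmax⟩ := Finset.exists_max_image
    (Finset.univ.filter fun s => ℳ (sqfreeDeg s) ≠ ⊥) Finset.card
    (by obtain ⟨s, hs⟩ := h; exact ⟨s, by simpa using hs⟩)
  obtain ⟨m, hm, hm0⟩ := (Submodule.ne_bot_iff _).1 (Finset.mem_filter.1 hs).2
  refine ⟨s, m, hm, hm0, fun j hj => ?_⟩
  have hbot : ℳ (sqfreeDeg (insert j s)) = ⊥ := by
    by_contra hne
    have := hmax (insert j s) (by simpa using hne)
    rw [Finset.card_insert_of_notMem hj] at this
    omega
  have := hX _ j hm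
  rwa [← sqfreeDeg_insert hj, SetLike.mem_coe, hbot, mem_bot] at this

end Monomial

section Stanley

variable {σ M : Type*} (K : Type*) [CommSemiring K] [AddCommMonoid M]
  [Module (MvPolynomial σ K) M]

noncomputable def stanleyMonomial {ι : Type*} (m : ι → M) (p : ι × (σ →₀ ℕ)) : M :=
  monomial p.2 (1 : K) • m p.1

def stanleyIndex {ι : Type*} (Z : ι → Finset σ) : Set (ι × (σ →₀ ℕ)) :=
  {p | p.2 ∈ exponentsIn (Z p.1)}

theorem stanleyIndex_snoc {t : ℕ} (Z : Fin t → Finset σ) (s : Finset σ) :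
    stanleyIndex (Fin.snoc Z s : Fin (t + 1) → Finset σ) =
      Prod.mk (Fin.last t) '' exponentsIn s ∪ Prod.map Fin.castSucc id '' stanleyIndex Z := by
  ext ⟨i, b⟩
  induction i using Fin.lastCases with
  | last => simp [stanleyIndex, Fin.castSucc_ne_last]
  | cast j => simp [stanleyIndex, (Fin.castSucc_ne_last j).symm]

variable {K} in
theorem image_stanleyIndex {ι : Type*} (m : ι → M) (Z : ι → Finset σ) :
    stanleyMonomial K m '' stanleyIndex Z =
      {v | ∃ i, ∃ b : σ →₀ ℕ, ↑b.support ⊆ (Z i : Set σ) ∧ v = monomial b (1 : K) • m i} := by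
  ext v
  constructor
  · rintro ⟨⟨i, b⟩, hb, rfl⟩
    exact ⟨i, b, hb, rfl⟩
  · rintro ⟨i, b, hb, rfl⟩
    exact ⟨(i, b), hb, rfl⟩

variable [Module K M]

def stanleySpace (m : M) (s : Finset σ) : Submodule K M :=
  span K ((fun b => monomial b (1 : K) • m) '' exponentsIn s)

structure IsSquarefreeStanleyDecomposition {ι : Type*} (ℳ : (σ →₀ ℕ) → Submodule K M)
    (m : ι → M) (Z : ι → Finset σ) (a : ι → σ →₀ ℕ) : Prop where
  mem : ∀ i, m i ∈ ℳ (a i)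
  le_one : ∀ i j, a i j ≤ 1
  support_subset : ∀ i, (a i).support ⊆ Z i
  linearIndepOn : LinearIndepOn K (stanleyMonomial K m) (stanleyIndex Z)
  span_eq_top : span K (stanleyMonomial K m '' stanleyIndex Z) = ⊤

variable {K}

theorem linearIndepOn_stanleyIndex_iff {ι : Type*} (m : ι → M) (Z : ι → Finset σ) :
    LinearIndepOn K (stanleyMonomial K m) (stanleyIndex Z) ↔
      LinearIndependent K
        (fun p : Σ i, {b : σ →₀ ℕ // ↑b.support ⊆ (Z i : Set σ)} =>
          monomial p.2.val (1 : K) • m p.1) :=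
  linearIndependent_equiv (Equiv.subtypeProdEquivSigmaSubtype fun i (b : σ →₀ ℕ) =>
    ↑b.support ⊆ (Z i : Set σ))
    (f := fun p : Σ i, {b : σ →₀ ℕ // ↑b.support ⊆ (Z i : Set σ)} =>
      monomial p.2.val (1 : K) • m p.1)

theorem isSquarefreeStanleyDecomposition_elim0 [Subsingleton M]
    (ℳ : (σ →₀ ℕ) → Submodule K M) :
    IsSquarefreeStanleyDecomposition K ℳ (Fin.elim0 : Fin 0 → M) Fin.elim0 Fin.elim0 where
  mem := (·.elim0)
  le_one := (·.elim0)
  support_subset := (·.elim0)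
  linearIndepOn := by
    rw [eq_empty_of_isEmpty (stanleyIndex _)]
    exact linearIndepOn_empty _ _
  span_eq_top := Subsingleton.elim _ _

end Stanley

section CommRing

variable {σ K M : Type*} [CommRing K] [AddCommGroup M] [Module K M]
  [Module (MvPolynomial σ K) M] {ℳ : (σ →₀ ℕ) → Submodule K M}

theorem isHomogeneous_stanleySpace [DecidableEq σ] [Decomposition ℳ] (hX : XSmulGraded ℳ)
    {s : Finset σ} {m : M} (hm : m ∈ ℳ (sqfreeDeg s)) :
    SetLike.IsHomogeneous ℳ (stanleySpace K m s) := by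
  refine isHomogeneous_span ?_
  rintro _ ⟨b, -, rfl⟩
  exact ⟨_, mapsTo_monomial_smul hX b _ hm⟩

variable [IsScalarTower K (MvPolynomial σ K) M]

theorem IsSquarefreeStanleyDecomposition.isSquarefree [DecidableEq σ] [Decomposition ℳ]
    (hX : XSmulGraded ℳ) {ι : Type*} {m : ι → M} {Z : ι → Finset σ} {a : ι → σ →₀ ℕ}
    (hd : IsSquarefreeStanleyDecomposition K ℳ m Z a) : IsSquarefree ℳ := by
  have hdeg (p : ι × (σ →₀ ℕ)) : stanleyMonomial K m p ∈ ℳ (a p.1 + p.2) :=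
    mapsTo_monomial_smul hX p.2 _ (hd.mem p.1)
  have hcomp (c : σ →₀ ℕ) :
      ℳ c = span K (stanleyMonomial K m '' {p ∈ stanleyIndex Z | a p.1 + p.2 = c}) := by
    refine le_antisymm
      (fun x hx => mem_span_image_degree_eq hdeg (hd.span_eq_top ▸ mem_top) hx) (span_le.2 ?_)
    rintro _ ⟨p, ⟨-, rfl⟩, rfl⟩
    exact hdeg p
  intro c i hc
  rw [hcomp c, hcomp (c + _)]
  refine bijOn_span_image (DistribSMul.toLinearMap K M (X i : MvPolynomial σ K))
    (g := fun p => (p.1, p.2 + Finsupp.single i 1)) (hd.linearIndepOn.mono (sep_subset _ _))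
    ⟨?_, fun p _ q _ h => by simpa [Prod.ext_iff] using h, ?_⟩
    fun p _ => X_smul_monomial_smul i p.2 (m p.1)
  · rintro ⟨j, b⟩ ⟨hb, rfl⟩
    refine ⟨fun k hk => ?_, by simp [add_assoc]⟩
    rcases Finset.mem_union.1 (Finsupp.support_add hk) with hk | hk
    · exact hb hk
    · obtain rfl := Finset.mem_singleton.1 (Finsupp.support_single_subset hk)
      rcases Nat.eq_zero_or_pos (a j k) with h | h
      · rw [Finsupp.add_apply, h, zero_add] at hc
        exact hb (Finsupp.mem_support_iff.2 (Nat.pos_iff_ne_zero.1 hc))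
      · exact hd.support_subset j (Finsupp.mem_support_iff.2 h.ne')
  · rintro ⟨j, b⟩ ⟨hb, hjb⟩
    obtain ⟨hle, hdeg⟩ := single_le_and_add_tsub_eq (hd.le_one j i) hc hjb
    refine ⟨(j, b - Finsupp.single i 1), ⟨fun k hk => hb (Finsupp.support_tsub hk), hdeg⟩, ?_⟩
    simp [tsub_add_cancel_of_le hle]

theorem restrictScalars_span_singleton_eq_stanleySpace {s : Finset σ} {m : M}
    (hm : ∀ j ∉ s, (X j : MvPolynomial σ K) • m = 0) :
    (span (MvPolynomial σ K) {m}).restrictScalars K = stanleySpace K m s := by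
  refine le_antisymm (fun x hx => ?_) (span_le.2 ?_)
  · obtain ⟨p, rfl⟩ := mem_span_singleton.1 hx
    clear hx
    induction p using MvPolynomial.induction_on' with
    | monomial b k =>
      rw [← mul_one k, ← smul_eq_mul, ← smul_monomial, smul_assoc]
      refine smul_mem _ _ ?_
      by_cases hb : b ∈ exponentsIn s
      · exact subset_span ⟨b, hb, rfl⟩
      · obtain ⟨j, hjb, hjs⟩ := not_subset.1 hb
        have hle : Finsupp.single j 1 ≤ b :=
          Finsupp.single_le_iff.2 (Nat.one_le_iff_ne_zero.2 (Finsupp.mem_support_iff.1 hjb))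
        rw [← tsub_add_cancel_of_le hle, ← X_smul_monomial_smul, ← smul_comm, hm j hjs,
          smul_zero]
        exact zero_mem _
    | add p p' hp hp' => rw [add_smul]; exact add_mem hp hp'
  · rintro _ ⟨b, -, rfl⟩
    exact smul_mem _ _ (mem_span_singleton_self m)

theorem surjOn_X_smul_stanleySpace_inter [DecidableEq σ] [Decomposition ℳ]
    (hX : XSmulGraded ℳ) {s : Finset σ} {m : M} (hm : m ∈ ℳ (sqfreeDeg s)) {c : σ →₀ ℕ}
    {i : σ} (hc : 0 < c i) :
    SurjOn (fun x : M => (X i : MvPolynomial σ K) • x) (stanleySpace K m s ∩ ℳ c)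
      (stanleySpace K m s ∩ ℳ (c + Finsupp.single i 1)) := by
  set w := fun b : σ →₀ ℕ => monomial b (1 : K) • m
  have hw (b : σ →₀ ℕ) : w b ∈ ℳ (sqfreeDeg s + b) := mapsTo_monomial_smul hX b _ hm
  rintro z ⟨hzN, hzc⟩
  have hle :
      span K (w '' {b ∈ exponentsIn s | sqfreeDeg s + b = c + Finsupp.single i 1}) ≤
        (span K (w '' {b ∈ exponentsIn s | sqfreeDeg s + b = c})).map
          (DistribSMul.toLinearMap K M (X i : MvPolynomial σ K)) := by
    rw [map_span]
    refine span_mono ?_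
    rintro _ ⟨b, ⟨hb, hbc⟩, rfl⟩
    obtain ⟨hle, hdeg⟩ := single_le_and_add_tsub_eq (sqfreeDeg_le_one s i) hc hbc
    refine ⟨w (b - Finsupp.single i 1),
      ⟨_, ⟨fun j hj => hb (Finsupp.support_tsub hj), hdeg⟩, rfl⟩, ?_⟩
    simp [w, X_smul_monomial_smul, tsub_add_cancel_of_le hle]
  obtain ⟨y, hy, rfl⟩ := hle (mem_span_image_degree_eq hw hzN hzc)
  refine ⟨y, ⟨span_mono (image_mono (sep_subset _ _)) hy, span_le.2 ?_ hy⟩, rfl⟩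
  rintro _ ⟨b, ⟨-, rfl⟩, rfl⟩
  exact hw b

variable {M' : Type*} [AddCommGroup M'] [Module K M'] [Module (MvPolynomial σ K) M']
  [IsScalarTower K (MvPolynomial σ K) M']

theorem xSmulGraded_map (q : M →ₗ[MvPolynomial σ K] M') (hX : XSmulGraded ℳ) :
    XSmulGraded fun c => (ℳ c).map (q.restrictScalars K) := by
  rintro a i _ ⟨x, hx, rfl⟩
  exact ⟨_, hX a i hx, map_smul q _ x⟩

theorem isSquarefree_map (q : M →ₗ[MvPolynomial σ K] M') (hsq : IsSquarefree ℳ)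
    (hker : ∀ c i, 0 < c i → SurjOn (fun x : M => (X i : MvPolynomial σ K) • x)
      (LinearMap.ker q ∩ ℳ c) (LinearMap.ker q ∩ ℳ (c + Finsupp.single i 1))) :
    IsSquarefree fun c => (ℳ c).map (q.restrictScalars K) := by
  intro c i hc
  refine ⟨?_, ?_, ?_⟩
  · rintro _ ⟨x, hx, rfl⟩
    exact ⟨_, (hsq c i hc).mapsTo hx, map_smul q _ x⟩
  · rintro _ ⟨x, hx, rfl⟩ _ ⟨y, hy, rfl⟩ hxy
    have hker_xy : (X i : MvPolynomial σ K) • (x - y) ∈ LinearMap.ker q := by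
      simpa [smul_sub, sub_eq_zero] using hxy
    obtain ⟨z, ⟨hzq, hz⟩, hzxy⟩ := hker c i hc
      ⟨hker_xy, (hsq c i hc).mapsTo (sub_mem hx hy)⟩
    have := (hsq c i hc).injOn hz (sub_mem hx hy) hzxy
    simpa [this, sub_eq_zero] using hzq
  · rintro _ ⟨y, hy, rfl⟩
    obtain ⟨x, hx, rfl⟩ := (hsq c i hc).surjOn hy
    exact ⟨q x, ⟨x, hx, rfl⟩, (map_smul q _ x).symm⟩

end CommRing

section Field

variable {σ K M : Type*} [Field K] [AddCommGroup M] [Module K M]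
  [Module (MvPolynomial σ K) M] {ℳ : (σ →₀ ℕ) → Submodule K M}

theorem linearIndepOn_monomial_smul [DecidableEq σ] [Decomposition ℳ] (hsq : IsSquarefree ℳ)
    {s : Finset σ} {m : M} (hm : m ∈ ℳ (sqfreeDeg s)) (hm0 : m ≠ 0) :
    LinearIndepOn K (fun b => monomial b (1 : K) • m) (exponentsIn s) := by
  have hbij (b : exponentsIn s) := bijOn_monomial_smul (K := K) hsq (b := b.1)
    (c := sqfreeDeg s) (by rw [support_sqfreeDeg]; exact b.2)
  refine ((Decomposition.isInternal ℳ).submodule_iSupIndep.comp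
    (f := fun b : exponentsIn s => sqfreeDeg s + b.1)
    fun b b' h => Subtype.ext (add_left_cancel h)).linearIndependent _
    (fun b => (hbij b).mapsTo hm) fun b h0 => hm0 ?_
  exact (hbij b).injOn hm (zero_mem _) (by simpa using h0)

variable [IsScalarTower K (MvPolynomial σ K) M]

theorem finiteDimensional_of_finite [DecidableEq σ] [Decomposition ℳ]
    [Module.Finite (MvPolynomial σ K) M] (hX : XSmulGraded ℳ) (c : σ →₀ ℕ) :
    FiniteDimensional K (ℳ c) := by
  classical
  -- `M` is spanned over `K` by the `x^e h` with `h` a homogeneous component of a generator, and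
  -- only finitely many of these have degree `c`.
  obtain ⟨G, hG⟩ := Module.Finite.fg_top (R := MvPolynomial σ K) (M := M)
  let h : G × (σ →₀ ℕ) → M := fun p => decompose ℳ (p.1 : M) p.2
  let v : (σ →₀ ℕ) × (G × (σ →₀ ℕ)) → M := fun p => monomial p.1 (1 : K) • h p.2
  have hv (p : (σ →₀ ℕ) × (G × (σ →₀ ℕ))) : v p ∈ ℳ (p.2.2 + p.1) :=
    mapsTo_monomial_smul hX _ _ (decompose ℳ _ _).2
  have hspan : span K (range v) = ⊤ := by
    have hmono : span K (range fun b : σ →₀ ℕ => monomial b (1 : K)) = ⊤ := by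
      rw [← coe_basisMonomials, Module.Basis.span_eq]
    rw [← range_smul_range (fun b => monomial b (1 : K)) h, span_smul_of_span_eq_top hmono,
      restrictScalars_eq_top_iff, eq_top_iff, ← hG, span_le]
    intro g hg
    rw [SetLike.mem_coe, ← sum_support_decompose ℳ g]
    exact sum_mem fun d _ => subset_span ⟨(⟨g, hg⟩, d), rfl⟩
  have hfin : {p : (σ →₀ ℕ) × (G × (σ →₀ ℕ)) | p.2.2 + p.1 = c}.Finite := by
    refine ((Finset.univ ×ˢ Finset.HasAntidiagonal.antidiagonal c).image
      fun p : G × ((σ →₀ ℕ) × (σ →₀ ℕ)) => (p.2.2, (p.1, p.2.1))).finite_toSet.subset ?_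
    rintro ⟨e, g, d⟩ (hp : d + e = c)
    simp [hp]
  have hle : ℳ c ≤ span K (v '' {p | p.2.2 + p.1 = c}) := fun x hx => by
    simpa using mem_span_image_degree_eq hv (s := univ) (by simp [hspan]) hx
  have := FiniteDimensional.span_of_finite K (hfin.image v)
  exact Submodule.finiteDimensional_of_le hle

theorem IsSquarefreeStanleyDecomposition.snoc [DecidableEq σ] {M' : Type*} [AddCommGroup M']
    [Module K M'] [Module (MvPolynomial σ K) M'] [IsScalarTower K (MvPolynomial σ K) M']
    {q : M →ₗ[MvPolynomial σ K] M'} {t : ℕ} {u : Fin t → M} {Z : Fin t → Finset σ}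
    {a : Fin t → σ →₀ ℕ}
    (hd : IsSquarefreeStanleyDecomposition K (fun c => (ℳ c).map (q.restrictScalars K))
      (q ∘ u) Z a)
    (hu : ∀ j, u j ∈ ℳ (a j)) {s : Finset σ} {m : M} (hm : m ∈ ℳ (sqfreeDeg s))
    (hker : (LinearMap.ker q).restrictScalars K = stanleySpace K m s)
    (hli : LinearIndepOn K (fun b => monomial b (1 : K) • m) (exponentsIn s)) :
    IsSquarefreeStanleyDecomposition K ℳ (Fin.snoc u m : Fin (t + 1) → M)
      (Fin.snoc Z s) (Fin.snoc a (sqfreeDeg s)) := by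
  set v := stanleyMonomial K (σ := σ) (Fin.snoc u m : Fin (t + 1) → M)
  have hlast : v ∘ Prod.mk (Fin.last t) = fun b => monomial b (1 : K) • m := by
    ext b; simp [v, stanleyMonomial]
  have hcast : q.restrictScalars K ∘ v ∘ Prod.map Fin.castSucc id = stanleyMonomial K (q ∘ u) := by
    ext p; simp [v, stanleyMonomial]
  have hspan_last : span K (v '' (Prod.mk (Fin.last t) '' exponentsIn s)) =
      LinearMap.ker (q.restrictScalars K) := by
    rw [← image_comp, hlast, LinearMap.ker_restrictScalars, hker, stanleySpace]
  refine ⟨?_, ?_, ?_, ?_, ?_⟩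
  · simpa [Fin.forall_fin_succ'] using ⟨hu, hm⟩
  · simpa [Fin.forall_fin_succ'] using ⟨hd.le_one, sqfreeDeg_le_one s⟩
  · simpa [Fin.forall_fin_succ', support_sqfreeDeg] using hd.support_subset
  · rw [stanleyIndex_snoc]
    refine (hlast ▸ hli).image_of_comp _ _ |>.union_of_quotient ?_
    rw [hspan_last]
    refine LinearIndepOn.of_comp ((LinearMap.ker _).liftQ (q.restrictScalars K) le_rfl) ?_
    exact LinearIndepOn.image_of_comp _ _ (hcast ▸ hd.linearIndepOn)
  · rw [stanleyIndex_snoc, image_union, span_union, hspan_last, eq_top_iff, sup_comm,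
      ← comap_map_eq, map_span, ← image_comp, ← image_comp, Function.comp_assoc, hcast,
      hd.span_eq_top, comap_top]

theorem exists_isSquarefreeStanleyDecomposition [Fintype σ] [DecidableEq σ] [Decomposition ℳ]
    [∀ c, FiniteDimensional K (ℳ c)] (hX : XSmulGraded ℳ) (hsq : IsSquarefree ℳ) :
    ∃ (t : ℕ) (m : Fin t → M) (Z : Fin t → Finset σ) (a : Fin t → σ →₀ ℕ),
      IsSquarefreeStanleyDecomposition K ℳ m Z a := by
  induction hD : ∑ s : Finset σ, Module.finrank K (ℳ (sqfreeDeg s))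
    using Nat.strong_induction_on generalizing M with
  | _ D ih =>
  by_cases h : ∃ s, ℳ (sqfreeDeg s) ≠ ⊥
  · obtain ⟨s, m, hm, hm0, hkill⟩ := exists_mem_sqfreeDeg_forall_X_smul_eq_zero hX h
    set N := span (MvPolynomial σ K) {m}
    have hker : (LinearMap.ker N.mkQ).restrictScalars K = stanleySpace K m s := by
      rw [ker_mkQ, restrictScalars_span_singleton_eq_stanleySpace hkill]
    set ℳ' := fun c => (ℳ c).map (N.mkQ.restrictScalars K)
    have hhom : SetLike.IsHomogeneous ℳ (LinearMap.ker (N.mkQ.restrictScalars K)) := by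
      rw [LinearMap.ker_restrictScalars, hker]
      exact isHomogeneous_stanleySpace hX hm
    let _ : Decomposition ℳ' :=
      (isInternal_map (q := N.mkQ.restrictScalars K) (mkQ_surjective N) hhom).chooseDecomposition
    have hsq' : IsSquarefree ℳ' := isSquarefree_map N.mkQ hsq fun c i hc => by
      simpa only [← hker, coe_restrictScalars] using surjOn_X_smul_stanleySpace_inter hX hm hc
    have hlt : ∑ s : Finset σ, Module.finrank K (ℳ' (sqfreeDeg s)) < D := by
      rw [← hD]
      refine Finset.sum_lt_sum (fun s _ => finrank_map_le _ _) ⟨s, Finset.mem_univ _, ?_⟩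
      exact finrank_map_lt_of_mem_ker _ hm hm0
        ((Submodule.Quotient.mk_eq_zero N).2 (mem_span_singleton_self m))
    obtain ⟨t, u', Z, a, hd⟩ := ih _ hlt (xSmulGraded_map N.mkQ hX) hsq' rfl
    choose u hu hqu using fun j => hd.mem j
    obtain rfl : N.mkQ ∘ u = u' := funext hqu
    exact ⟨t + 1, _, _, _, hd.snoc hu hm hker (linearIndepOn_monomial_smul hsq hm hm0)⟩
  · push Not at h
    have : Subsingleton M := by
      rw [← Submodule.subsingleton_iff K, ← subsingleton_iff_bot_eq_top,
        ← (Decomposition.isInternal ℳ).submodule_iSup_eq_top, eq_comm, iSup_eq_bot]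
      exact fun c => by_contra fun hc => sqfreeDeg_support_ne_bot hsq hc (h _)
    exact ⟨0, _, _, _, isSquarefreeStanleyDecomposition_elim0 ℳ⟩

end Field

end SquarefreeModule

open SquarefreeModule in
/-- A finitely generated `ℕⁿ`-graded module `M` over
`S = K[x_1,…,x_n]` has a squarefree Stanley decomposition
`M = ⊕ m_i K[Z_i]` (each `m_i` homogeneous of squarefree degree with
`supp(deg m_i) ⊆ Z_i`, and the elements `x^b m_i`, `supp b ⊆ Z_i`,
forming a `K`-basis of `M`) if and only if `M` is a squarefree module. -/
theorem stmt10 (K : Type) [Field K] (n : ℕ)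
    (M : Type) [AddCommGroup M] [Module K M]
    [Module (MvPolynomial (Fin n) K) M]
    [IsScalarTower K (MvPolynomial (Fin n) K) M]
    (ℳ : (Fin n →₀ ℕ) → Submodule K M)
    (hdecomp : DirectSum.IsInternal ℳ)
    (hfg : Module.Finite (MvPolynomial (Fin n) K) M)
    (hcompat : ∀ (a : Fin n →₀ ℕ) (i : Fin n), ∀ m ∈ ℳ a,
        (X i : MvPolynomial (Fin n) K) • m ∈ ℳ (a + Finsupp.single i 1)) :
    (∃ (t : ℕ) (m : Fin t → M) (Z : Fin t → Finset (Fin n))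
        (a : Fin t → (Fin n →₀ ℕ)),
      (∀ i, m i ∈ ℳ (a i)) ∧
      (∀ i j, a i j ≤ 1) ∧
      (∀ i, (a i).support ⊆ Z i) ∧
      LinearIndependent K
        (fun p : Σ i : Fin t, {b : Fin n →₀ ℕ // ↑b.support ⊆ (Z i : Set (Fin n))} =>
          (monomial p.2.val (1 : K)) • m p.1) ∧
      Submodule.span K
        {v : M | ∃ (i : Fin t) (b : Fin n →₀ ℕ),
          ↑b.support ⊆ (Z i : Set (Fin n)) ∧ v = (monomial b (1 : K)) • m i} = ⊤)
    ↔
    (∀ (a : Fin n →₀ ℕ) (i : Fin n), 0 < a i →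
      Function.Bijective (fun x : ℳ a =>
        (⟨(X i : MvPolynomial (Fin n) K) • (x : M), hcompat a i x x.2⟩ :
          ℳ (a + Finsupp.single i 1)))) := by
  let _ := hdecomp.chooseDecomposition
  have _ := finiteDimensional_of_finite (K := K) hcompat
  rw [← isSquarefree_iff hcompat]
  constructor
  · rintro ⟨t, m, Z, a, hm, hle, hZ, hli, hspan⟩
    exact IsSquarefreeStanleyDecomposition.isSquarefree hcompat ⟨hm, hle, hZ,
      (linearIndepOn_stanleyIndex_iff m Z).2 hli, by rwa [image_stanleyIndex]⟩
  · intro hsq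
    obtain ⟨t, m, Z, a, hd⟩ := exists_isSquarefreeStanleyDecomposition hcompat hsq
    exact ⟨t, m, Z, a, hd.mem, hd.le_one, hd.support_subset,
      (linearIndepOn_stanleyIndex_iff m Z).1 hd.linearIndepOn,
      by rw [← image_stanleyIndex]; exact hd.span_eq_top⟩
end

section
/- Let I = (u_1,…,u_m) ⊆ S be a monomial ideal with linear quotients with respect to the order u_1,…,u_m, i.e., I_i := (u_1,…,u_{i−1}) : u_i is generated by a subset G(I_i) of the variables for i = 2,…,m. Set Z_1 = {x_1,…,x_n} and Z_i = {x_1,…,x_n} \ G(I_i). Then I = ⊕_{i=1}^m u_i K[Z_i] is a Stanley decomposition of I. -/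
/-!
The linear-quotient condition, tested on monomials, says: a monomial `x^(u i + b)` is divisible
by some earlier generator `u j` exactly when `b` involves a variable of `G i`. Hence the sets
`u i + ℕ^(Z_i)` are pairwise disjoint, and every exponent above some `u i` lies in one of them
(if `d - u i` involves some `x_k` with `k ∈ G i`, then `d` lies above an earlier `u j`, and we
descend). Monomials being a `K`-basis, this is the Stanley decomposition.
-/

namespace MvPolynomial

variable {σ ι R : Type*}

/-- The colon ideal `(u_j : j < i) : u_i` is generated by the variables `x_k`, `k ∈ G i`,
as seen on monomials `x^b`. -/
def HasLinearQuotients [LT ι] (u : ι → σ →₀ ℕ) (G : ι → Set σ) : Prop :=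
  ∀ i b, (∃ j < i, u j ≤ u i + b) ↔ ∃ k ∈ G i, b k ≠ 0

section Semiring

variable [CommSemiring R]

theorem mem_ideal_span_monomials_iff {p : ι → Prop} {u : ι → σ →₀ ℕ} {f : MvPolynomial σ R} :
    f ∈ Ideal.span {g | ∃ j, p j ∧ g = monomial (u j) 1} ↔
      ∀ d ∈ f.support, ∃ j, p j ∧ u j ≤ d := by
  have : {g | ∃ j, p j ∧ g = monomial (u j) (1 : R)} =
      (fun s => monomial s 1) '' (u '' {j | p j}) := by
    ext g; simp [eq_comm]
  simp [this, mem_ideal_span_monomial_image]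

theorem restrictScalars_ideal_span_monomials (u : ι → σ →₀ ℕ) :
    (Ideal.span {g | ∃ i, g = monomial (u i) (1 : R)}).restrictScalars R =
      restrictSupport R {d | ∃ i, u i ≤ d} := by
  ext f
  simp only [Submodule.restrictScalars_mem, mem_restrictSupport_iff, Set.subset_def]
  simpa using mem_ideal_span_monomials_iff (p := fun _ => True) (u := u) (f := f)

theorem hasLinearQuotients_of_colon [Nontrivial R] [LT ι] {u : ι → σ →₀ ℕ} {G : ι → Set σ}
    (hcolon : ∀ i, {f : MvPolynomial σ R | f * monomial (u i) 1 ∈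
        Ideal.span {g | ∃ j, j < i ∧ g = monomial (u j) 1}} =
      (Ideal.span {g | ∃ j ∈ G i, g = (X j : MvPolynomial σ R)} : Set _)) :
    HasLinearQuotients u G := by
  classical
  intro i b
  have hX : {g | ∃ j ∈ G i, g = (X j : MvPolynomial σ R)} = X '' G i := by
    ext g; simp [eq_comm]
  have hmem := Set.ext_iff.mp (hcolon i) (monomial b 1)
  rw [Set.mem_ofPred_eq, monomial_mul, one_mul, SetLike.mem_coe, hX, mem_ideal_span_X_image,
    mem_ideal_span_monomials_iff, support_monomial, support_monomial, if_neg one_ne_zero,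
    if_neg one_ne_zero] at hmem
  simpa [add_comm] using hmem

end Semiring

namespace HasLinearQuotients

variable [LinearOrder ι] {u : ι → σ →₀ ℕ} {G : ι → Set σ}

theorem injective_add (h : HasLinearQuotients u G) :
    Function.Injective fun p : Σ i, {b : σ →₀ ℕ // ∀ k ∈ G i, b k = 0} => u p.1 + p.2.val := by
  have hdisj : ∀ i j (b : {b : σ →₀ ℕ // ∀ k ∈ G i, b k = 0}) c, j < i → u i + b.1 ≠ u j + c := by
    rintro i j ⟨b, hb⟩ c hji heq
    obtain ⟨k, hk, hbk⟩ := (h i b).mp ⟨j, hji, heq ▸ le_self_add⟩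
    exact hbk (hb k hk)
  rintro ⟨i, b⟩ ⟨j, c⟩ heq
  rcases lt_trichotomy i j with hij | rfl | hji
  · exact absurd heq.symm (hdisj j i c b hij)
  · exact congrArg _ (Subtype.ext (add_left_cancel heq))
  · exact absurd heq (hdisj i j b c hji)

theorem exists_eq_add_of_le [WellFoundedLT ι] (h : HasLinearQuotients u G) (i : ι) {d : σ →₀ ℕ}
    (hd : u i ≤ d) : ∃ j b, (∀ k ∈ G j, b k = 0) ∧ d = u j + b := by
  induction i using WellFoundedLT.induction with
  | _ i ih =>
  by_cases hG : ∀ k ∈ G i, (d - u i) k = 0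
  · exact ⟨i, d - u i, hG, (add_tsub_cancel_of_le hd).symm⟩
  push Not at hG
  obtain ⟨k, hk, hdk⟩ := hG
  obtain ⟨j, hji, hj⟩ := (h i (Finsupp.single k 1)).mpr ⟨k, hk, by simp⟩
  refine ih j hji (hj.trans ?_)
  calc u i + Finsupp.single k 1 ≤ u i + (d - u i) :=
        add_le_add_right (Finsupp.single_le_iff.mpr (Nat.one_le_iff_ne_zero.mpr hdk)) _
    _ = d := add_tsub_cancel_of_le hd

theorem setOf_eq_add_eq_setOf_le [WellFoundedLT ι] (h : HasLinearQuotients u G) :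
    {d | ∃ i b, (∀ k ∈ G i, b k = 0) ∧ d = u i + b} = {d | ∃ i, u i ≤ d} := by
  ext d
  constructor
  · rintro ⟨i, b, -, rfl⟩
    exact ⟨i, le_self_add⟩
  · rintro ⟨i, hi⟩
    exact h.exists_eq_add_of_le i hi

variable [CommSemiring R]

theorem linearIndependent_monomial_add (h : HasLinearQuotients u G) :
    LinearIndependent R fun p : Σ i, {b : σ →₀ ℕ // ∀ k ∈ G i, b k = 0} =>
      (monomial (u p.1 + p.2.val) (1 : R) : MvPolynomial σ R) :=
  (basisMonomials σ R).linearIndependent.comp _ h.injective_add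

theorem span_monomial_add [WellFoundedLT ι] (h : HasLinearQuotients u G) :
    Submodule.span R {f | ∃ i b, (∀ k ∈ G i, b k = 0) ∧ f = monomial (u i + b) (1 : R)} =
      (Ideal.span {g | ∃ i, g = monomial (u i) (1 : R)}).restrictScalars R := by
  rw [restrictScalars_ideal_span_monomials, ← h.setOf_eq_add_eq_setOf_le, restrictSupport_eq_span]
  congr 1
  ext f
  simp [eq_comm]

end HasLinearQuotients

end MvPolynomial

open MvPolynomial

/-- Let `I = (u_1,…,u_m) ⊆ S = K[x_1,…,x_n]` be a monomial
ideal with linear quotients: each colon ideal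
`I_i = (u_1,…,u_{i−1}) : u_i` is generated by the set of variables
`{x_j : j ∈ G i}`.  With `Z_i = {x_1,…,x_n} \ G(I_i)`, the ideal decomposes
as `I = ⊕_{i=1}^m u_i K[Z_i]`: the monomials `u_i · x^b` with
`supp b ∩ G i = ∅` form a `K`-basis of `I`. -/
theorem stmt16 (K : Type) [Field K] (n m : ℕ)
    (u : Fin m → (Fin n →₀ ℕ)) (G : Fin m → Finset (Fin n))
    (hlq : ∀ i : Fin m,
      {f : MvPolynomial (Fin n) K |
          f * monomial (u i) (1 : K) ∈
            Ideal.span {g | ∃ j : Fin m, j < i ∧ g = monomial (u j) (1 : K)}} =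
        (Ideal.span {g | ∃ j ∈ G i, g = (X j : MvPolynomial (Fin n) K)} : Set _)) :
    LinearIndependent K
      (fun p : Σ i : Fin m, {b : Fin n →₀ ℕ // ∀ j ∈ G i, b j = 0} =>
        (monomial (u p.1 + p.2.val) (1 : K) : MvPolynomial (Fin n) K)) ∧
    Submodule.span K
      {f : MvPolynomial (Fin n) K | ∃ (i : Fin m) (b : Fin n →₀ ℕ),
        (∀ j ∈ G i, b j = 0) ∧ f = monomial (u i + b) (1 : K)} =
      (Ideal.span {g | ∃ i : Fin m, g = monomial (u i) (1 : K)}).restrictScalars K := by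
  have h : HasLinearQuotients u fun i => (G i : Set (Fin n)) := hasLinearQuotients_of_colon hlq
  exact ⟨h.linearIndependent_monomial_add, h.span_monomial_add⟩
end

section
/- Let Δ be a simplicial complex on [n] and P : Δ = ⋃_{i=1}^t [F_i, G_i] a partition of Δ into disjoint intervals [F_i,G_i] = {H : F_i ⊆ H ⊆ G_i}. Then S/I_Δ = ⊕_{i=1}^t x_{F_i} K[Z_{G_i}] is a squarefree Stanley decomposition of S/I_Δ, where x_{F_i} = ∏_{j∈F_i} x_j and Z_{G_i} = {x_j : j ∈ G_i}. -/
/-!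
Since `Δ` is closed under subsets, `I_Δ` is spanned by the monomials `x^a` with `supp a ∉ Δ`,
and every element of `I_Δ` has zero coefficient at each `a` with `supp a ∈ Δ`. Hence the
classes of the monomials `x^a` with `supp a ∈ Δ` form a `K`-basis of `S/I_Δ`. The partition
makes `(i, b) ↦ e_{F i} + b` a bijection onto exactly these exponents: `supp (e_{F i} + b)`
lies in `[F i, G i]`, and a face `H` lies in a unique interval, which recovers `i`, then `b`.
-/

open MvPolynomial

namespace Finsupp

variable {σ : Type*}

lemma sum_single_one_apply [DecidableEq σ] (T : Finset σ) (k : σ) :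
    (∑ j ∈ T, single j 1 : σ →₀ ℕ) k = if k ∈ T then 1 else 0 := by
  simp [finsetSum_apply, single_apply]

lemma support_sum_single_one_add [DecidableEq σ] (T : Finset σ) (b : σ →₀ ℕ) :
    ((∑ j ∈ T, single j 1 : σ →₀ ℕ) + b).support = T ∪ b.support := by
  ext k
  simp only [mem_support_iff, add_apply, Finset.mem_union, sum_single_one_apply]
  split_ifs <;> simp_all

lemma support_sum_single_one (T : Finset σ) :
    (∑ j ∈ T, single j 1 : σ →₀ ℕ).support = T := by
  classical
  simpa using support_sum_single_one_add T 0

lemma sum_single_one_le_iff (T : Finset σ) (a : σ →₀ ℕ) :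
    (∑ j ∈ T, single j 1 : σ →₀ ℕ) ≤ a ↔ T ⊆ a.support := by
  classical
  simp only [le_def, sum_single_one_apply, Finset.subset_iff, mem_support_iff]
  refine ⟨fun h k hk => ?_, fun h k => ?_⟩
  · simpa [hk, Nat.one_le_iff_ne_zero] using h k
  · split_ifs with hk
    · exact Nat.one_le_iff_ne_zero.2 (h hk)
    · exact Nat.zero_le _

end Finsupp

open Finsupp

namespace MvPolynomial

variable {σ : Type*} (K : Type*) [CommRing K]

noncomputable def stanleyReisnerIdeal (Δ : Set (Finset σ)) : Ideal (MvPolynomial σ K) :=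
  Ideal.span {g | ∃ T : Finset σ, T ∉ Δ ∧ g = monomial (∑ j ∈ T, single j 1) (1 : K)}

variable {K} {Δ : Set (Finset σ)}

/-- Vanishing at face exponents survives multiplication because every exponent dividing a
face exponent is again a face exponent. -/
lemma coeff_eq_zero_of_mem_stanleyReisnerIdeal (hΔ : ∀ F ∈ Δ, ∀ G ⊆ F, G ∈ Δ)
    {f : MvPolynomial σ K} (hf : f ∈ stanleyReisnerIdeal K Δ) :
    ∀ a : σ →₀ ℕ, a.support ∈ Δ → coeff a f = 0 := by
  classical
  induction hf using Submodule.span_induction with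
  | mem x hx =>
    obtain ⟨T, hT, rfl⟩ := hx
    intro a ha
    rw [coeff_monomial, if_neg]
    rintro rfl
    exact hT (by rwa [support_sum_single_one] at ha)
  | zero => simp
  | add x y _ _ hx hy => intro a ha; rw [coeff_add, hx a ha, hy a ha, add_zero]
  | smul c x _ hx =>
    intro a ha
    rw [smul_eq_mul, coeff_mul]
    refine Finset.sum_eq_zero fun uv huv => ?_
    have hle : uv.2 ≤ a := Finset.HasAntidiagonal.mem_antidiagonal.1 huv ▸ le_add_self
    rw [hx _ (hΔ _ ha _ (support_mono hle)), mul_zero]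

lemma monomial_mem_stanleyReisnerIdeal {a : σ →₀ ℕ} (ha : a.support ∉ Δ) :
    monomial a (1 : K) ∈ stanleyReisnerIdeal K Δ := by
  have hle := (sum_single_one_le_iff a.support a).2 subset_rfl
  rw [← tsub_add_cancel_of_le hle, ← one_mul (1 : K), ← monomial_mul]
  exact Ideal.mul_mem_left _ _ (Ideal.subset_span ⟨a.support, ha, rfl⟩)

variable {ι : Type*} (E : ι → σ →₀ ℕ)

lemma linearIndependent_mk_monomial (hΔ : ∀ F ∈ Δ, ∀ G ⊆ F, G ∈ Δ)
    (hE : Function.Injective E) (hEΔ : ∀ p, (E p).support ∈ Δ) :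
    LinearIndependent K
      (fun p => Ideal.Quotient.mk (stanleyReisnerIdeal K Δ) (monomial (E p) (1 : K))) := by
  classical
  rw [linearIndependent_iff']
  intro s g hsum p hp
  have hmem : ∑ q ∈ s, g q • monomial (E q) (1 : K) ∈ stanleyReisnerIdeal K Δ := by
    rw [← Ideal.Quotient.eq_zero_iff_mem, ← hsum, map_sum]
    exact Finset.sum_congr rfl fun q _ =>
      map_smul (Ideal.Quotient.mkₐ K (stanleyReisnerIdeal K Δ)) (g q) _
  have hcoeff := coeff_eq_zero_of_mem_stanleyReisnerIdeal hΔ hmem (E p) (hEΔ p)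
  rwa [coeff_sum, Finset.sum_eq_single p (fun q _ hqp => by simp [hE.ne hqp])
    (fun h => absurd hp h), coeff_smul, coeff_monomial, if_pos rfl, smul_eq_mul,
    mul_one] at hcoeff

lemma span_mk_monomial_eq_top (hE : ∀ a : σ →₀ ℕ, a.support ∈ Δ → a ∈ Set.range E) :
    Submodule.span K (Set.range
      fun p => Ideal.Quotient.mk (stanleyReisnerIdeal K Δ) (monomial (E p) (1 : K))) = ⊤ := by
  set mk := (Ideal.Quotient.mkₐ K (stanleyReisnerIdeal K Δ)).toLinearMap
  have hmk : LinearMap.range mk = ⊤ :=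
    LinearMap.range_eq_top.2 (Ideal.Quotient.mkₐ_surjective K _)
  rw [eq_top_iff, ← hmk, LinearMap.range_eq_map, ← (basisMonomials σ K).span_eq,
    Submodule.map_span, Submodule.span_le]
  rintro _ ⟨_, ⟨a, rfl⟩, rfl⟩
  by_cases ha : a.support ∈ Δ
  · obtain ⟨p, rfl⟩ := hE a ha
    exact Submodule.subset_span ⟨p, by simp [mk]⟩
  · have : mk (monomial a 1) = 0 :=
      Ideal.Quotient.eq_zero_iff_mem.2 (monomial_mem_stanleyReisnerIdeal ha)
    simp [this]

end MvPolynomial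

section Partition

variable {σ ι : Type*} (F G : ι → Finset σ)

noncomputable def intervalExponent (p : Σ i, {b : σ →₀ ℕ // ↑b.support ⊆ (G i : Set σ)}) :
    σ →₀ ℕ :=
  (∑ j ∈ F p.1, single j 1) + p.2.val

variable {F G}

lemma support_intervalExponent [DecidableEq σ] (hFG : ∀ i, F i ⊆ G i)
    (p : Σ i, {b : σ →₀ ℕ // ↑b.support ⊆ (G i : Set σ)}) :
    F p.1 ⊆ (intervalExponent F G p).support ∧ (intervalExponent F G p).support ⊆ G p.1 := by
  rw [intervalExponent, support_sum_single_one_add]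
  exact ⟨Finset.subset_union_left, Finset.union_subset (hFG p.1) (mod_cast p.2.2)⟩

lemma intervalExponent_injective (hFG : ∀ i, F i ⊆ G i)
    (hdisj : ∀ H i j, F i ⊆ H → H ⊆ G i → F j ⊆ H → H ⊆ G j → i = j) :
    Function.Injective (intervalExponent F G) := by
  classical
  rintro ⟨i, b, hb⟩ ⟨j, c, hc⟩ h
  obtain ⟨hFi, hGi⟩ := support_intervalExponent hFG ⟨i, b, hb⟩
  obtain ⟨hFj, hGj⟩ := support_intervalExponent hFG ⟨j, c, hc⟩
  rw [← h] at hFj hGj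
  obtain rfl := hdisj _ i j hFi hGi hFj hGj
  obtain rfl : b = c := add_left_cancel h
  rfl

lemma support_intervalExponent_mem {Δ : Set (Finset σ)} (hΔ : ∀ F ∈ Δ, ∀ G ⊆ F, G ∈ Δ)
    (hFG : ∀ i, F i ⊆ G i) (hGΔ : ∀ i, G i ∈ Δ)
    (p : Σ i, {b : σ →₀ ℕ // ↑b.support ⊆ (G i : Set σ)}) :
    (intervalExponent F G p).support ∈ Δ := by
  classical
  exact hΔ _ (hGΔ p.1) _ (support_intervalExponent hFG p).2

lemma mem_range_intervalExponent {a : σ →₀ ℕ} {i : ι} (hF : F i ⊆ a.support)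
    (hG : a.support ⊆ G i) : a ∈ Set.range (intervalExponent F G) := by
  have hle := (sum_single_one_le_iff _ a).2 hF
  have hb : ↑(a - ∑ j ∈ F i, single j 1).support ⊆ (G i : Set σ) :=
    Finset.coe_subset.2 ((support_mono tsub_le_self).trans hG)
  exact ⟨⟨i, _, hb⟩, add_tsub_cancel_of_le hle⟩

end Partition

/-- Let `Δ` be a simplicial complex on `[n]` and
`P : Δ = ⋃_{i=1}^t [F_i, G_i]` a partition of `Δ` into disjoint intervals
(`every H ∈ Δ lies in exactly one interval [F_i, G_i]`).  Then
`S/I_Δ = ⊕_{i=1}^t x_{F_i} K[Z_{G_i}]` is a squarefree Stanley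
decomposition of the Stanley–Reisner ring: the residue classes of the
monomials `x_{F_i} · x^b` with `supp b ⊆ G_i` form a `K`-basis of `S/I_Δ`. -/
theorem stmt18 (K : Type) [Field K] (n t : ℕ)
    (Δ : Finset (Finset (Fin n)))
    (hΔ : ∀ F ∈ Δ, ∀ G ⊆ F, G ∈ Δ)
    (F G : Fin t → Finset (Fin n))
    (hFG : ∀ i, F i ⊆ G i) (hGΔ : ∀ i, G i ∈ Δ)
    (hpart : ∀ H : Finset (Fin n),
        H ∈ Δ ↔ ∃! i : Fin t, F i ⊆ H ∧ H ⊆ G i) :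
    LinearIndependent K
      (fun p : Σ i : Fin t, {b : Fin n →₀ ℕ // ↑b.support ⊆ (G i : Set (Fin n))} =>
        Ideal.Quotient.mk
          (Ideal.span {g : MvPolynomial (Fin n) K |
            ∃ T : Finset (Fin n), T ∉ Δ ∧ g = monomial (∑ j ∈ T, Finsupp.single j 1) (1 : K)})
          (monomial ((∑ j ∈ F p.1, Finsupp.single j 1) + p.2.val) (1 : K))) ∧
    Submodule.span K
      (Set.range
        (fun p : Σ i : Fin t, {b : Fin n →₀ ℕ // ↑b.support ⊆ (G i : Set (Fin n))} =>
          Ideal.Quotient.mk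
            (Ideal.span {g : MvPolynomial (Fin n) K |
              ∃ T : Finset (Fin n), T ∉ Δ ∧ g = monomial (∑ j ∈ T, Finsupp.single j 1) (1 : K)})
            (monomial ((∑ j ∈ F p.1, Finsupp.single j 1) + p.2.val) (1 : K)))) = ⊤ := by
  have hdisj : ∀ H i j, F i ⊆ H → H ⊆ G i → F j ⊆ H → H ⊆ G j → i = j :=
    fun H i j hFi hGi hFj hGj =>
      ((hpart H).1 (hΔ _ (hGΔ i) _ hGi)).unique ⟨hFi, hGi⟩ ⟨hFj, hGj⟩
  have hcover : ∀ a : Fin n →₀ ℕ, a.support ∈ (Δ : Set (Finset (Fin n))) →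
      a ∈ Set.range (intervalExponent F G) := fun a ha =>
    let ⟨_, ⟨hF, hG⟩, _⟩ := (hpart _).1 ha
    mem_range_intervalExponent hF hG
  exact ⟨linearIndependent_mk_monomial (intervalExponent F G) hΔ
      (intervalExponent_injective hFG hdisj) (support_intervalExponent_mem hΔ hFG hGΔ),
    span_mk_monomial_eq_top (intervalExponent F G) hcover⟩
end
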